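/- Let E be a topological graph with no singular vertices and fix n ≥ 1. Then B^n is closed in E^n if and only if V_n is closed in E^0. -/

import Mathlib

/-- A topological graph: vertex space `V`, edge space `E`, continuous range map `r`
and locally homeomorphic source map `s`. -/
structure TopGraph (V E : Type) [TopologicalSpace V] [TopologicalSpace E] where
  r : E → V
  s : E → V
  r_cont : Continuous r
  s_locHomeo : IsLocalHomeomorph s

namespace TopGraph

variable {V E : Type} [TopologicalSpace V] [TopologicalSpace E] (G : TopGraph V E)

/-- The predicate that `μ : Fin n → E` is a (finite) path. -/
def IsPathFn {n : ℕ} (μ : Fin n → E) : Prop :=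
  ∀ (i : ℕ) (h : i + 1 < n), G.s (μ ⟨i, Nat.lt_of_succ_lt h⟩) = G.r (μ ⟨i + 1, h⟩)

/-- The space `E^n` of paths of length `n`, with the subspace topology of the product. -/
def Path (n : ℕ) : Type := {μ : Fin n → E // G.IsPathFn μ}

instance (n : ℕ) : TopologicalSpace (G.Path n) :=
  inferInstanceAs (TopologicalSpace {μ : Fin n → E // G.IsPathFn μ})

/-- `r^n(μ) = r(μ₁)`. -/
def pathRange {n : ℕ} (hn : 0 < n) (μ : G.Path n) : V := G.r (μ.1 ⟨0, hn⟩)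

/-- `s^n(μ) = s(μₙ)`. -/
def pathSource {n : ℕ} (hn : 0 < n) (μ : G.Path n) : V :=
  G.s (μ.1 ⟨n - 1, Nat.sub_lt hn Nat.one_pos⟩)

/-- A cycle is a path whose range equals its source; its base point is its range. -/
def IsCycle {n : ℕ} (hn : 0 < n) (μ : G.Path n) : Prop :=
  G.pathRange hn μ = G.pathSource hn μ

/-- A path `μ ∈ E^n` has an entrance if some edge `e ≠ μᵢ` has `r(e) = r(μᵢ)`. -/
def HasEntrance {n : ℕ} (μ : G.Path n) : Prop :=
  ∃ (i : Fin n) (e : E), G.r e = G.r (μ.1 i) ∧ e ≠ μ.1 i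

theorem block_lt {n k : ℕ} (j : Fin k) (i : Fin n) : (j : ℕ) * n + (i : ℕ) < k * n := by
  have hi := i.2
  have hj := j.2
  calc (j : ℕ) * n + (i : ℕ) < ((j : ℕ) + 1) * n := by rw [Nat.add_mul, Nat.one_mul]; omega
    _ ≤ k * n := Nat.mul_le_mul (Nat.succ_le_of_lt hj) le_rfl

/-- The `j`-th block of length `n` of a path of length `k * n`. -/
def block {n k : ℕ} (α : G.Path (k * n)) (j : Fin k) : G.Path n :=
  ⟨fun i => α.1 ⟨(j : ℕ) * n + (i : ℕ), block_lt j i⟩,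
    fun i h => α.2 ((j : ℕ) * n + i) (block_lt j ⟨i + 1, h⟩)⟩

/-- `α ∈ kN` : every block of `α` lies in `N`. -/
def BlocksIn {n k : ℕ} (N : Set (G.Path n)) (α : G.Path (k * n)) : Prop :=
  ∀ j : Fin k, G.block α j ∈ N

/-- The set `B^n` of cycles of length `n` admitting `k ≥ 1` and an open neighbourhood `N`
satisfying conditions (1) and (2) of Notation 3.3. -/
def B (n : ℕ) (hn : 0 < n) : Set (G.Path n) :=
  {μ | G.IsCycle hn μ ∧
    ∃ (k : ℕ) (hk : 0 < k) (N : Set (G.Path n)), IsOpen N ∧ μ ∈ N ∧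
      (∀ α β : G.Path (k * n), G.BlocksIn N α → G.BlocksIn N β → α ≠ β →
        ¬ ∃ γ ∈ N, G.pathRange hn γ = G.pathSource (Nat.mul_pos hk hn) α ∧
          G.pathSource hn γ = G.pathSource (Nat.mul_pos hk hn) β) ∧
      (∀ α : G.Path (k * n), G.BlocksIn N α →
        ¬ ∃ γ ∈ N, G.IsCycle hn γ ∧ G.HasEntrance γ ∧
          G.pathRange hn γ = G.pathSource (Nat.mul_pos hk hn) α)}

/-- The infinite path space `E^∞`, with the subspace topology of the product. -/
def InfPath : Type := {x : ℕ → E // ∀ i : ℕ, G.s (x i) = G.r (x (i + 1))}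

instance : TopologicalSpace G.InfPath :=
  inferInstanceAs (TopologicalSpace {x : ℕ → E // ∀ i : ℕ, G.s (x i) = G.r (x (i + 1))})

/-- The one-sided shift on `E^∞`. -/
def shift (x : G.InfPath) : G.InfPath := ⟨fun i => x.1 (i + 1), fun i => x.2 (i + 1)⟩

/-- The segment `x_{a+1} ⋯ x_{a+len}` (0-indexed: edges `a, …, a+len-1`) of an infinite path. -/
def segment (x : G.InfPath) (a len : ℕ) : G.Path len :=
  ⟨fun i => x.1 (a + (i : ℕ)), fun i _ => x.2 (a + i)⟩

/-- The boundary path groupoid `Γ(E^∞, σ)` as a set. -/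
def Gamma : Type :=
  {g : G.InfPath × ℤ × G.InfPath //
    ∃ k l : ℕ, g.2.1 = (k : ℤ) - (l : ℤ) ∧ G.shift^[k] g.1 = G.shift^[l] g.2.2}

/-- Basic sets `U(U, W, k, l)` for the topology of `Γ(E^∞, σ)`. -/
def basicSet (U W : Set G.InfPath) (k l : ℕ) : Set G.Gamma :=
  {g | g.1.1 ∈ U ∧ g.1.2.2 ∈ W ∧ g.1.2.1 = (k : ℤ) - (l : ℤ) ∧
    G.shift^[k] g.1.1 = G.shift^[l] g.1.2.2}

/-- The topology on `Γ(E^∞, σ)` generated by the sets `U(U, W, k, l)` with `U, W` open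
and `σ^k`, `σ^l` injective on `U` resp. `W`. -/
instance : TopologicalSpace G.Gamma :=
  TopologicalSpace.generateFrom
    {S | ∃ (U W : Set G.InfPath) (k l : ℕ), IsOpen U ∧ IsOpen W ∧
      Set.InjOn (G.shift^[k]) U ∧ Set.InjOn (G.shift^[l]) W ∧ S = G.basicSet U W k l}

/-- The isotropy group bundle `Iso(Γ(E^∞, σ))`. -/
def isoSet : Set G.Gamma := {g | g.1.1 = g.1.2.2}

/-- The interior of the isotropy group bundle. -/
def isoInterior : Set G.Gamma := interior G.isoSet

/-- The set `E^0_fin` of finite receivers. -/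
def finRecv : Set V := {v | ∃ N : Set V, IsOpen N ∧ v ∈ N ∧ IsCompact (G.r ⁻¹' closure N)}

/-- The set `E^0_sce` of sources. -/
def sce : Set V := (closure (Set.range G.r))ᶜ

/-- The set `E^0_rg` of regular vertices. -/
def rg : Set V := G.finRecv \ closure G.sce

/-- The set `E^0_sg` of singular vertices. -/
def sg : Set V := G.rgᶜ

/-- The set `V_n` of vertices having an open neighbourhood consisting of base points of
cycles without entrances in `E^n`. -/
def Vset (n : ℕ) (hn : 0 < n) : Set V :=
  {v | ∃ W : Set V, IsOpen W ∧ v ∈ W ∧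
    ∀ w ∈ W, ∃ γ : G.Path n, G.IsCycle hn γ ∧ ¬ G.HasEntrance γ ∧ G.pathRange hn γ = w}

/-- `E` is topologically free if the set of base points of cycles without entrances has
empty interior. -/
def TopologicallyFree : Prop :=
  interior {v : V | ∃ (n : ℕ) (hn : 0 < n) (γ : G.Path n),
    G.IsCycle hn γ ∧ ¬ G.HasEntrance γ ∧ G.pathRange hn γ = v} = ∅

/-- The groupoid `Γ(E^∞, σ)` is essentially free if the set of units with trivial
isotropy is dense. -/
def EssentiallyFree : Prop :=
  Dense {x : G.InfPath | ∀ g : G.Gamma, g.1.1 = x → g.1.2.2 = x → g.1.2.1 = 0}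

end TopGraph

/-!
A cycle without entrance is rigid: every path starting at its base point runs around it. Hence
every cycle based in `V_n` lies in `B^n` (take `k = 1` and `N = (r^n)⁻¹ W`), while condition (2),
tested on the repetitions `μ^k`, shows that no cycle of `B^n` has an entrance. Without singular vertices `r` is proper and surjective. If
`μ ∈ B^n`, closedness of `r` lets every vertex `w` near `r(μ)` start a path of length `(k+1)n`
shadowing `μ^{k+1}` inside `N`; condition (1), applied to its subpaths starting at `0` and at `n`,
makes it `n`-periodic, so its first `n` edges form a cycle in `N` based at `w`, which has no
entrance by condition (2). Thus `B^n = {cycles} ∩ (r^n)⁻¹ V_n` and `V_n = r^n(B^n)`, and `r^n` is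
proper, hence closed, because `r` is.
-/

open Filter Topology Set Function

namespace TopGraph

variable {V E : Type} [TopologicalSpace V] [TopologicalSpace E] (G : TopGraph V E)

theorem s_continuous : Continuous G.s := G.s_locHomeo.continuous

theorem continuous_pathRange {n : ℕ} (hn : 0 < n) : Continuous (G.pathRange hn) :=
  G.r_cont.comp ((continuous_apply _).comp continuous_subtype_val)

theorem continuous_pathSource {n : ℕ} (hn : 0 < n) : Continuous (G.pathSource hn) :=
  G.s_continuous.comp ((continuous_apply _).comp continuous_subtype_val)

theorem exists_forall_mem_nhds_subset {n : ℕ} {N : Set (G.Path n)} {μ : G.Path n}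
    (hN : N ∈ 𝓝 μ) : ∃ U : Fin n → Set E, (∀ i, U i ∈ 𝓝 (μ.1 i)) ∧
      ∀ η : G.Path n, (∀ i, η.1 i ∈ U i) → η ∈ N := by
  obtain ⟨O, hO, hON⟩ := (mem_nhds_subtype _ μ N).1 hN
  rw [nhds_pi, Filter.mem_pi'] at hO
  obtain ⟨I, U, hU, hUO⟩ := hO
  exact ⟨U, hU, fun η hη => hON (hUO fun i _ => hη i)⟩

section Segments

theorem pathRange_segment (x : G.InfPath) (a : ℕ) {len : ℕ} (hlen : 0 < len) :
    G.pathRange hlen (G.segment x a len) = G.r (x.1 a) := rfl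

theorem pathSource_segment (x : G.InfPath) (a : ℕ) {len : ℕ} (hlen : 0 < len) :
    G.pathSource hlen (G.segment x a len) = G.r (x.1 (a + len)) := by
  have h := x.2 (a + (len - 1))
  rwa [show a + (len - 1) + 1 = a + len by omega] at h

theorem block_segment (x : G.InfPath) (a : ℕ) {n k : ℕ} (j : Fin k) :
    G.block (G.segment x a (k * n)) j = G.segment x (a + j * n) n :=
  Subtype.ext <| funext fun _ => congrArg x.1 (Nat.add_assoc _ _ _).symm

theorem pathRange_block_zero {n k : ℕ} (hn : 0 < n) (hk : 0 < k) (α : G.Path (k * n)) :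
    G.pathRange hn (G.block α ⟨0, hk⟩) = G.pathRange (Nat.mul_pos hk hn) α :=
  congrArg (fun j => G.r (α.1 j)) (Fin.ext (by simp))

end Segments

section CycleRepeat

variable {n : ℕ} (hn : 0 < n) {μ : G.Path n}

theorem s_apply_mod_eq_r_apply_succ_mod (hc : G.IsCycle hn μ) (i : ℕ) :
    G.s (μ.1 ⟨i % n, Nat.mod_lt i hn⟩) = G.r (μ.1 ⟨(i + 1) % n, Nat.mod_lt _ hn⟩) := by
  rcases lt_or_ge (i % n + 1) n with h | h
  · have hi : (i + 1) % n = i % n + 1 := by rw [← Nat.mod_add_mod, Nat.mod_eq_of_lt h]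
    rw [μ.2 _ h]
    exact congrArg (fun j => G.r (μ.1 j)) (Fin.ext hi.symm)
  · have hi : i % n = n - 1 := by have := Nat.mod_lt i hn; omega
    have hi' : (i + 1) % n = 0 := by
      rw [← Nat.mod_add_mod, hi, Nat.sub_add_cancel hn, Nat.mod_self]
    have hμ : G.r (μ.1 ⟨0, hn⟩) = G.s (μ.1 ⟨n - 1, Nat.sub_lt hn Nat.one_pos⟩) := hc
    rw [congrArg μ.1 (Fin.ext hi' : (⟨(i + 1) % n, _⟩ : Fin n) = ⟨0, hn⟩), hμ]
    exact congrArg (fun j => G.s (μ.1 j)) (Fin.ext hi)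

def cycleRepeat (hc : G.IsCycle hn μ) : G.InfPath :=
  ⟨fun i => μ.1 ⟨i % n, Nat.mod_lt i hn⟩, G.s_apply_mod_eq_r_apply_succ_mod hn hc⟩

variable (hc : G.IsCycle hn μ)

theorem r_cycleRepeat_zero : G.r ((G.cycleRepeat hn hc).1 0) = G.pathRange hn μ :=
  congrArg (fun j => G.r (μ.1 j)) (Fin.ext (Nat.zero_mod n))

theorem segment_cycleRepeat_mul (q : ℕ) : G.segment (G.cycleRepeat hn hc) (q * n) n = μ :=
  Subtype.ext <| funext fun i => congrArg μ.1 <| Fin.ext <| by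
    simp [Nat.mod_eq_of_lt i.2]

theorem pathSource_segment_cycleRepeat {k : ℕ} (hk : 0 < k) :
    G.pathSource (Nat.mul_pos hk hn) (G.segment (G.cycleRepeat hn hc) 0 (k * n)) =
      G.pathRange hn μ := by
  rw [pathSource_segment]
  exact congrArg (fun j => G.r (μ.1 j)) (Fin.ext (by simp))

theorem blocksIn_segment_cycleRepeat {N : Set (G.Path n)} (hμ : μ ∈ N) (k : ℕ) :
    G.BlocksIn N (G.segment (G.cycleRepeat hn hc) 0 (k * n)) := fun j => by
  rwa [block_segment, zero_add, segment_cycleRepeat_mul]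

end CycleRepeat

def NoEntrance (x : G.InfPath) : Prop := ∀ i e, G.r e = G.r (x.1 i) → e = x.1 i

theorem noEntrance_cycleRepeat {n : ℕ} (hn : 0 < n) {μ : G.Path n} (hc : G.IsCycle hn μ)
    (hμ : ¬ G.HasEntrance μ) : G.NoEntrance (G.cycleRepeat hn hc) :=
  fun _ e he => by_contra fun h => hμ ⟨_, e, he, h⟩

theorem eq_segment_of_noEntrance {x : G.InfPath} (hx : G.NoEntrance x) {m : ℕ} (hm : 0 < m)
    (η : G.Path m) (hη : G.pathRange hm η = G.r (x.1 0)) : η = G.segment x 0 m := by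
  refine Subtype.ext (funext fun ⟨i, hi⟩ => ?_)
  show η.1 ⟨i, hi⟩ = x.1 (0 + i)
  rw [zero_add]
  induction i with
  | zero => exact hx 0 _ hη
  | succ i ih => exact hx _ _ (by rw [← η.2 i hi, ih (by omega), x.2])

section RigidCycle

variable {n : ℕ} (hn : 0 < n) {μ : G.Path n}

theorem eq_of_pathRange_eq_of_noEntrance (hc : G.IsCycle hn μ) (hμ : ¬ G.HasEntrance μ)
    {m : ℕ} (hm : 0 < m) {η η' : G.Path m}
    (hη : G.pathRange hm η = G.pathRange hn μ) (hη' : G.pathRange hm η' = G.pathRange hn μ) :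
    η = η' := by
  have hx := G.noEntrance_cycleRepeat hn hc hμ
  rw [← G.r_cycleRepeat_zero hn hc] at hη hη'
  rw [G.eq_segment_of_noEntrance hx hm η hη, G.eq_segment_of_noEntrance hx hm η' hη']

theorem pathSource_eq_pathRange_of_noEntrance (hc : G.IsCycle hn μ) (hμ : ¬ G.HasEntrance μ)
    {k : ℕ} (hk : 0 < k) {η : G.Path (k * n)}
    (hη : G.pathRange (Nat.mul_pos hk hn) η = G.pathRange hn μ) :
    G.pathSource (Nat.mul_pos hk hn) η = G.pathRange (Nat.mul_pos hk hn) η := by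
  rw [← G.r_cycleRepeat_zero hn hc] at hη
  rw [G.eq_segment_of_noEntrance (G.noEntrance_cycleRepeat hn hc hμ) _ η hη,
    G.pathSource_segment_cycleRepeat hn hc hk, pathRange_segment, r_cycleRepeat_zero]

end RigidCycle

section ConditionsOfB

variable {n k : ℕ} (hn : 0 < n) (hk : 0 < k)

/-- Condition (1) in the definition of `B n`. -/
def NoPathBetweenSources (N : Set (G.Path n)) : Prop :=
  ∀ α β : G.Path (k * n), G.BlocksIn N α → G.BlocksIn N β → α ≠ β →
    ¬ ∃ γ ∈ N, G.pathRange hn γ = G.pathSource (Nat.mul_pos hk hn) α ∧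
      G.pathSource hn γ = G.pathSource (Nat.mul_pos hk hn) β

/-- Condition (2) in the definition of `B n`. -/
def NoEntranceCycleAtSources (N : Set (G.Path n)) : Prop :=
  ∀ α : G.Path (k * n), G.BlocksIn N α →
    ¬ ∃ γ ∈ N, G.IsCycle hn γ ∧ G.HasEntrance γ ∧
      G.pathRange hn γ = G.pathSource (Nat.mul_pos hk hn) α

theorem not_hasEntrance_of_noEntranceCycleAtSources {N : Set (G.Path n)}
    (hN : G.NoEntranceCycleAtSources hn hk N) {μ : G.Path n} (hc : G.IsCycle hn μ)
    (hμ : μ ∈ N) : ¬ G.HasEntrance μ := fun he =>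
  hN _ (G.blocksIn_segment_cycleRepeat hn hc hμ k)
    ⟨μ, hμ, hc, he, (G.pathSource_segment_cycleRepeat hn hc hk).symm⟩

end ConditionsOfB

theorem mem_B_of_pathRange_mem_Vset {n : ℕ} (hn : 0 < n) {μ : G.Path n} (hc : G.IsCycle hn μ)
    (hV : G.pathRange hn μ ∈ G.Vset n hn) : μ ∈ G.B n hn := by
  obtain ⟨W, hWo, hμW, hW⟩ := hV
  have hrigid : ∀ γ : G.Path n, G.pathRange hn γ ∈ W → G.IsCycle hn γ ∧ ¬ G.HasEntrance γ :=
    fun γ hγ => by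
      obtain ⟨δ, hδc, hδe, hδ⟩ := hW _ hγ
      obtain rfl := G.eq_of_pathRange_eq_of_noEntrance hn hδc hδe hn hδ.symm rfl
      exact ⟨hδc, hδe⟩
  have hloop : ∀ α : G.Path (1 * n), G.BlocksIn (G.pathRange hn ⁻¹' W) α →
      G.pathRange (Nat.mul_pos one_pos hn) α ∈ W ∧
        G.pathSource (Nat.mul_pos one_pos hn) α = G.pathRange (Nat.mul_pos one_pos hn) α :=
    fun α hα => by
      have hαW : G.pathRange (Nat.mul_pos one_pos hn) α ∈ W := by
        rw [← G.pathRange_block_zero hn one_pos α]; exact hα ⟨0, one_pos⟩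
      obtain ⟨δ, hδc, hδe, hδ⟩ := hW _ hαW
      exact ⟨hαW, G.pathSource_eq_pathRange_of_noEntrance hn hδc hδe one_pos hδ.symm⟩
  refine ⟨hc, 1, one_pos, G.pathRange hn ⁻¹' W, hWo.preimage (G.continuous_pathRange hn), hμW,
    ?_, ?_⟩
  · rintro α β hα hβ hne ⟨γ, hγ, hγα, hγβ⟩
    obtain ⟨hαW, hα⟩ := hloop α hα
    have hβα :
        G.pathRange (Nat.mul_pos one_pos hn) β = G.pathRange (Nat.mul_pos one_pos hn) α := by
      rw [← (hloop β hβ).2, ← hγβ, ← (hrigid γ hγ).1, hγα, hα]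
    obtain ⟨δ, hδc, hδe, hδ⟩ := hW _ hαW
    exact hne (G.eq_of_pathRange_eq_of_noEntrance hn hδc hδe _ hδ.symm (hβα.trans hδ.symm))
  · rintro - - ⟨γ, hγ, -, hent, -⟩
    exact (hrigid γ hγ).2 hent

def consInfPath (e : E) (x : G.InfPath) (h : G.s e = G.r (x.1 0)) : G.InfPath :=
  ⟨fun | 0 => e | i + 1 => x.1 i, fun | 0 => h | i + 1 => x.2 i⟩

theorem exists_infPath_of_surjective (hr : Surjective G.r) (v : V) :
    ∃ x : G.InfPath, G.r (x.1 0) = v := by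
  choose next hnext using hr
  exact ⟨⟨fun i => Nat.rec (next v) (fun _ e => next (G.s e)) i, fun _ => (hnext _).symm⟩,
    hnext v⟩

theorem eventually_exists_infPath_shadowing (hcl : IsClosedMap G.r) (hsurj : Surjective G.r)
    {ρ : G.InfPath} (hρ : G.NoEntrance ρ) {U : ℕ → Set E} (hU : ∀ i, U i ∈ 𝓝 (ρ.1 i)) (m : ℕ) :
    ∀ᶠ w in 𝓝 (G.r (ρ.1 0)), ∃ x : G.InfPath, G.r (x.1 0) = w ∧ ∀ i < m, x.1 i ∈ U i := by
  induction m generalizing ρ U with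
  | zero =>
    exact Eventually.of_forall fun w => (G.exists_infPath_of_surjective hsurj w).imp
      fun _ hx => ⟨hx, fun _ hi => absurd hi (Nat.not_lt_zero _)⟩
  | succ m ih =>
    have htail : ∀ᶠ w in 𝓝 (G.s (ρ.1 0)), ∃ x : G.InfPath, G.r (x.1 0) = w ∧
        ∀ i < m, x.1 i ∈ U (i + 1) := by
      rw [ρ.2 0]
      exact ih (ρ := G.shift ρ) (fun i => hρ (i + 1)) (U := fun i => U (i + 1)) fun i => hU (i + 1)
    have hnear : ∀ᶠ e in 𝓝 (ρ.1 0), e ∈ U 0 ∧ ∃ x : G.InfPath, G.r (x.1 0) = G.s e ∧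
        ∀ i < m, x.1 i ∈ U (i + 1) :=
      Eventually.and (hU 0) ((G.s_continuous.tendsto _).eventually htail)
    -- `r` is closed and its fibre over `r (ρ 0)` is `{ρ 0}`, so edges ending near `r (ρ 0)`
    -- lie near `ρ 0`.
    filter_upwards [hcl.eventually_nhds_fiber _ fun e he => by rwa [hρ 0 e he]] with w hw
    obtain ⟨e, rfl⟩ := hsurj w
    obtain ⟨he, x, hx, hxU⟩ := hw e rfl
    exact ⟨G.consInfPath e x hx.symm, rfl, fun | 0, _ => he | i + 1, hi => hxU i (by omega)⟩

theorem isCycle_segment_of_noPathBetweenSources {n k : ℕ} (hn : 0 < n) (hk : 0 < k)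
    {N : Set (G.Path n)} (hN : G.NoPathBetweenSources hn hk N) {U : Fin n → Set E}
    (hUN : ∀ η : G.Path n, (∀ i, η.1 i ∈ U i) → η ∈ N) {x : G.InfPath}
    (hx : ∀ i < k * n + n, x.1 i ∈ U ⟨i % n, Nat.mod_lt i hn⟩) :
    G.IsCycle hn (G.segment x 0 n) ∧ G.segment x 0 n ∈ N := by
  have hmem : ∀ q ≤ k, G.segment x (q * n) n ∈ N := fun q hq => hUN _ fun i => by
    have hi := hx (q * n + i) (by nlinarith [i.2])
    rwa [show (⟨(q * n + i) % n, Nat.mod_lt _ hn⟩ : Fin n) = i by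
      ext; simp [Nat.mod_eq_of_lt i.2]] at hi
  have hα : G.BlocksIn N (G.segment x 0 (k * n)) := fun j => by
    rw [block_segment, zero_add]; exact hmem j j.2.le
  have hβ : G.BlocksIn N (G.segment x n (k * n)) := fun j => by
    rw [block_segment, ← one_add_mul]; exact hmem _ (by omega)
  have hαβ : G.segment x 0 (k * n) = G.segment x n (k * n) := by
    by_contra hne
    refine hN _ _ hα hβ hne ⟨_, hmem k le_rfl, ?_, ?_⟩
    · rw [pathRange_segment, pathSource_segment, zero_add]
    · rw [pathSource_segment, pathSource_segment, add_comm]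
  have hx0 : x.1 0 = x.1 n :=
    congrArg (fun α : G.Path (k * n) => α.1 ⟨0, Nat.mul_pos hk hn⟩) hαβ
  refine ⟨?_, by simpa using hmem 0 (Nat.zero_le k)⟩
  show G.pathRange hn _ = G.pathSource hn _
  rw [pathRange_segment, pathSource_segment, zero_add, hx0]

theorem pathRange_mem_Vset_of_mem_B (hcl : IsClosedMap G.r) (hsurj : Surjective G.r) {n : ℕ}
    (hn : 0 < n) {μ : G.Path n} (hμ : μ ∈ G.B n hn) : G.pathRange hn μ ∈ G.Vset n hn := by
  obtain ⟨hc, k, hk, N, hNo, hμN, h1, h2⟩ := hμ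
  obtain ⟨U, hU, hUN⟩ := G.exists_forall_mem_nhds_subset (hNo.mem_nhds hμN)
  have hev := G.eventually_exists_infPath_shadowing hcl hsurj
    (G.noEntrance_cycleRepeat hn hc
      (G.not_hasEntrance_of_noEntranceCycleAtSources hn hk h2 hc hμN))
    (U := fun i => U ⟨i % n, Nat.mod_lt i hn⟩) (fun i => hU _) (k * n + n)
  rw [r_cycleRepeat_zero] at hev
  obtain ⟨W, hW, hWo, hμW⟩ := eventually_nhds_iff.1 hev
  refine ⟨W, hWo, hμW, fun w hw => ?_⟩
  obtain ⟨x, rfl, hx⟩ := hW w hw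
  obtain ⟨hxc, hxN⟩ := G.isCycle_segment_of_noPathBetweenSources hn hk h1 hUN hx
  exact ⟨_, hxc, G.not_hasEntrance_of_noEntranceCycleAtSources hn hk h2 hxc hxN, rfl⟩

theorem B_eq_setOf_isCycle_inter (hcl : IsClosedMap G.r) (hsurj : Surjective G.r) {n : ℕ}
    (hn : 0 < n) : G.B n hn = {μ | G.IsCycle hn μ} ∩ G.pathRange hn ⁻¹' G.Vset n hn :=
  Set.ext fun _ => ⟨fun hμ => ⟨hμ.1, G.pathRange_mem_Vset_of_mem_B hcl hsurj hn hμ⟩,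
    fun hμ => G.mem_B_of_pathRange_mem_Vset hn hμ.1 hμ.2⟩

theorem Vset_eq_image_B (hcl : IsClosedMap G.r) (hsurj : Surjective G.r) {n : ℕ} (hn : 0 < n) :
    G.Vset n hn = G.pathRange hn '' G.B n hn := by
  refine Subset.antisymm (fun v hv => ?_)
    (image_subset_iff.2 fun _ => G.pathRange_mem_Vset_of_mem_B hcl hsurj hn)
  obtain ⟨W, -, hvW, hW⟩ := id hv
  obtain ⟨δ, hδc, -, rfl⟩ := hW v hvW
  exact ⟨δ, G.mem_B_of_pathRange_mem_Vset hn hδc hv, rfl⟩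

theorem isCompact_preimage_pathRange [T2Space V] (hr : IsProperMap G.r) {n : ℕ} (hn : 0 < n)
    {C : Set V} (hC : IsCompact C) : IsCompact (G.pathRange hn ⁻¹' C) := by
  let K : ℕ → Set E := fun i => Nat.rec (G.r ⁻¹' C) (fun _ Ki => G.r ⁻¹' (G.s '' Ki)) i
  have hK : ∀ i, IsCompact (K i) := fun i => by
    induction i with
    | zero => exact hr.isCompact_preimage hC
    | succ i ih => exact hr.isCompact_preimage (ih.image G.s_continuous)
  have hμK : ∀ μ ∈ G.pathRange hn ⁻¹' C, ∀ i (hi : i < n), μ.1 ⟨i, hi⟩ ∈ K i := by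
    intro μ hμ i hi
    induction i with
    | zero => exact hμ
    | succ i ih => exact show G.r _ ∈ G.s '' K i from μ.2 i hi ▸ ⟨_, ih (by omega), rfl⟩
  have hpath : IsClosed {f : Fin n → E | G.IsPathFn f} := by
    simp only [IsPathFn, ofPred_forall]
    exact isClosed_iInter fun i => isClosed_iInter fun h =>
      isClosed_eq (G.s_continuous.comp (continuous_apply _)) (G.r_cont.comp (continuous_apply _))
  refine ((hpath.isClosedEmbedding_subtypeVal.isCompact_preimage
    (isCompact_univ_pi fun i : Fin n => hK i))).of_isClosed_subset
      (hC.isClosed.preimage (G.continuous_pathRange hn)) fun μ hμ i _ => hμK μ hμ i i.2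

theorem isProperMap_pathRange [T2Space V] [LocallyCompactSpace V] (hr : IsProperMap G.r)
    {n : ℕ} (hn : 0 < n) : IsProperMap (G.pathRange hn) :=
  isProperMap_iff_isCompact_preimage.2
    ⟨G.continuous_pathRange hn, fun _ hC => G.isCompact_preimage_pathRange hr hn hC⟩

section NoSingularVertices

theorem mem_rg_of_sg_eq_empty (hsg : G.sg = ∅) (v : V) : v ∈ G.rg :=
  compl_empty_iff.1 hsg ▸ mem_univ v

variable [T2Space V]

theorem isCompact_preimage_r (hsg : G.sg = ∅) {C : Set V} (hC : IsCompact C) :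
    IsCompact (G.r ⁻¹' C) := by
  choose N hNo hvN hNc using fun v => (G.mem_rg_of_sg_eq_empty hsg v).1
  obtain ⟨t, -, hCt⟩ := hC.elim_nhds_subcover N fun v _ => (hNo v).mem_nhds (hvN v)
  refine (t.isCompact_biUnion fun v _ => hNc v).of_isClosed_subset
    (hC.isClosed.preimage G.r_cont) fun e he => ?_
  obtain ⟨v, hv, hev⟩ := mem_iUnion₂.1 (hCt he)
  exact mem_iUnion₂.2 ⟨v, hv, subset_closure hev⟩

theorem isProperMap_r [LocallyCompactSpace V] (hsg : G.sg = ∅) : IsProperMap G.r :=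
  isProperMap_iff_isCompact_preimage.2 ⟨G.r_cont, fun _ => G.isCompact_preimage_r hsg⟩

theorem surjective_r [LocallyCompactSpace V] (hsg : G.sg = ∅) : Surjective G.r := fun v => by
  have hvr : v ∈ closure (range G.r) :=
    not_not.1 fun h => (G.mem_rg_of_sg_eq_empty hsg v).2 (subset_closure h)
  rwa [(G.isProperMap_r hsg).isClosedMap.isClosed_range.closure_eq] at hvr

end NoSingularVertices

end TopGraph

theorem stmt4_general {V E : Type} [TopologicalSpace V] [TopologicalSpace E]
    [T2Space V] [LocallyCompactSpace V]
    (G : TopGraph V E)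
    (hsg : G.sg = ∅) (n : ℕ) (hn : 0 < n) :
    IsClosed (G.B n hn) ↔ IsClosed (G.Vset n hn) := by
  have hr := G.isProperMap_r hsg
  have hsurj := G.surjective_r hsg
  constructor
  · intro hB
    rw [G.Vset_eq_image_B hr.isClosedMap hsurj hn]
    exact (G.isProperMap_pathRange hr hn).isClosedMap _ hB
  · intro hV
    rw [G.B_eq_setOf_isCycle_inter hr.isClosedMap hsurj hn]
    exact (isClosed_eq (G.continuous_pathRange hn) (G.continuous_pathSource hn)).inter
      (hV.preimage (G.continuous_pathRange hn))

/-- Theorem 3.8, second part: for a topological graph without singular vertices,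
`B^n` is closed iff `V_n` is closed. -/
theorem stmt4 {V E : Type} [TopologicalSpace V] [TopologicalSpace E]
    [T2Space V] [T2Space E] [LocallyCompactSpace V] [LocallyCompactSpace E]
    [SecondCountableTopology V] [SecondCountableTopology E]
    (G : TopGraph V E)
    (hsg : G.sg = ∅) (n : ℕ) (hn : 0 < n) :
    IsClosed (G.B n hn) ↔ IsClosed (G.Vset n hn) :=
  stmt4_general G hsg n hn
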